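/- arXiv:1912.02098 — 3 statements merged into one kernel-verified Lean document; each statement's English description precedes it below -/
import Mathlib

section
/- If operators {φ_y}_{y∈O} ⊆ ℝ^{n×n} satisfy Σ_y φ_yᵀ φ_y = I (the NOOM normalization), then the OOM operators τ_y = φ_y ⊗ φ_y satisfy the OOM normalization σᵀ Σ_y τ_y = σᵀ, where σ = vec(Iₙ) ∈ ℝ^{n²}. -/
open Matrix Kronecker

theorem Matrix.vec_one_eq_ite {m R : Type*} [DecidableEq m] [Zero R] [One R] :
    vec (1 : Matrix m m R) = fun p => if p.1 = p.2 then 1 else 0 := by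
  ext ⟨i, j⟩
  simp [one_apply, eq_comm]

theorem Matrix.vec_one_vecMul_sum_kronecker_self {m l ι R : Type*} [CommSemiring R]
    [Fintype m] [DecidableEq m] [Fintype ι] (φ : ι → Matrix m l R) :
    vec 1 ᵥ* (∑ y, φ y ⊗ₖ φ y) = vec (∑ y, (φ y)ᵀ * φ y) := by
  simp only [vecMul_sum, vec_vecMul_kronecker, Matrix.mul_one, vec_sum]

theorem stmt5 {n : ℕ} {O : Type*} [Fintype O]
    (φ : O → Matrix (Fin n) (Fin n) ℝ)
    (h : ∑ y : O, (φ y)ᵀ * φ y = 1) :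
    Matrix.vecMul (fun p : Fin n × Fin n => if p.1 = p.2 then (1 : ℝ) else 0)
        (∑ y : O, φ y ⊗ₖ φ y) =
      fun p : Fin n × Fin n => if p.1 = p.2 then (1 : ℝ) else 0 := by
  rw [← vec_one_eq_ite, vec_one_vecMul_sum_kronecker_self, h]
end

section
/- Every n-dimensional K-HQMM is an n²-dimensional general OOM: setting σ = vec(Iₙ), τ_y = L_y = Σ_w K̄_{y,w} ⊗ K_{y,w}, and x₀ = vec(ρ₀), the tuple (ℂ^{n²}, (τ_y), x₀, σ) satisfies σ†x₀ = 1, the normalized-marginal condition, and σ† τ_{y_t}⋯τ_{y_1} x₀ ∈ [0,1] for all observation sequences. -/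
/-
The superoperator `L_y = Σ_w K̄_{y,w} ⊗ K_{y,w}` acts on `vec ρ` as the Kraus map
`Φ_y ρ = Σ_w K_{y,w} ρ K_{y,w}†`, so `τ_{y_t} ⋯ τ_{y_1} x₀ = vec ρ_t` for the unnormalised state
`ρ_t` after observing `y_1, …, y_t`, and `σ† vec ρ = tr ρ`. Kraus maps preserve positivity, and
the completeness relation `Σ_{y,w} K†K = I` makes `Σ_y tr(Φ_y ρ) = tr ρ`; hence the traces
`tr ρ_t` are nonnegative, nonincreasing in `t`, and marginalise correctly.
-/

open Matrix Kronecker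
open scoped ComplexOrder

/-- Column-stacking vectorization: `vecCol M (j, i) = M i j`. -/
def vecCol {n : ℕ} (M : Matrix (Fin n) (Fin n) ℂ) : Fin n × Fin n → ℂ :=
  fun p => M p.2 p.1

section KrausMap

variable {n ι O : Type*} [Fintype n] [Fintype ι]

def krausMap (K : ι → Matrix n n ℂ) (M : Matrix n n ℂ) : Matrix n n ℂ :=
  ∑ w, K w * M * (K w)ᴴ

theorem Matrix.PosSemidef.krausMap {M : Matrix n n ℂ} (hM : M.PosSemidef)
    (K : ι → Matrix n n ℂ) : (krausMap K M).PosSemidef :=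
  posSemidef_sum _ fun w _ => hM.mul_mul_conjTranspose_same (K w)

theorem trace_krausMap (K : ι → Matrix n n ℂ) (M : Matrix n n ℂ) :
    (krausMap K M).trace = ((∑ w, (K w)ᴴ * K w) * M).trace := by
  simp only [krausMap, trace_sum, Finset.sum_mul]
  exact Finset.sum_congr rfl fun w _ => trace_mul_cycle _ _ _

theorem sum_trace_krausMap [Fintype O] [DecidableEq n] {K : O → ι → Matrix n n ℂ}
    (hK : ∑ y, ∑ w, (K y w)ᴴ * K y w = 1) (M : Matrix n n ℂ) :
    ∑ y, (krausMap (K y) M).trace = M.trace := by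
  simp only [trace_krausMap, ← trace_sum, ← Finset.sum_mul, hK, one_mul]

theorem posSemidef_foldr_krausMap (K : O → ι → Matrix n n ℂ) {ρ : Matrix n n ℂ}
    (hρ : ρ.PosSemidef) (ys : List O) :
    (ys.foldr (fun y => krausMap (K y)) ρ).PosSemidef := by
  induction ys with
  | nil => exact hρ
  | cons y ys ih => exact ih.krausMap (K y)

theorem trace_foldr_krausMap_le [Fintype O] [DecidableEq n] {K : O → ι → Matrix n n ℂ}
    (hK : ∑ y, ∑ w, (K y w)ᴴ * K y w = 1) {ρ : Matrix n n ℂ} (hρ : ρ.PosSemidef)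
    (ys : List O) : (ys.foldr (fun y => krausMap (K y)) ρ).trace ≤ ρ.trace := by
  induction ys with
  | nil => exact le_rfl
  | cons y ys ih =>
    set P := ys.foldr (fun y => krausMap (K y)) ρ
    have hP : P.PosSemidef := posSemidef_foldr_krausMap K hρ ys
    calc (krausMap (K y) P).trace
        ≤ ∑ y', (krausMap (K y') P).trace :=
          Finset.single_le_sum (fun y' _ => (hP.krausMap (K y')).trace_nonneg)
            (Finset.mem_univ y)
      _ = P.trace := sum_trace_krausMap hK P
      _ ≤ ρ.trace := ih

end KrausMap

section Vectorization

variable {n : ℕ}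

theorem star_vecCol_one_dotProduct (M : Matrix (Fin n) (Fin n) ℂ) :
    star (vecCol 1) ⬝ᵥ vecCol M = M.trace := by
  simp [vecCol, dotProduct, Fintype.sum_prod_type, one_apply, trace, apply_ite]

theorem kroneckerMap_map_star_mulVec_vecCol (A B M : Matrix (Fin n) (Fin n) ℂ) :
    (A.map star ⊗ₖ B) *ᵥ vecCol M = vecCol (B * M * Aᴴ) := by
  ext ⟨a, b⟩
  simp only [vecCol, mulVec, dotProduct, Fintype.sum_prod_type, kroneckerMap_apply, map_apply,
    mul_apply, conjTranspose_apply, Finset.sum_mul]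
  exact Finset.sum_congr rfl fun c _ => Finset.sum_congr rfl fun d _ => by ring

theorem sum_kroneckerMap_mulVec_vecCol {ι : Type*} [Fintype ι]
    (K : ι → Matrix (Fin n) (Fin n) ℂ) (M : Matrix (Fin n) (Fin n) ℂ) :
    (∑ w, (K w).map star ⊗ₖ K w) *ᵥ vecCol M = vecCol (krausMap K M) := by
  rw [sum_mulVec]
  simp only [kroneckerMap_map_star_mulVec_vecCol]
  ext p
  simp [vecCol, krausMap, Matrix.sum_apply]

theorem list_prod_mulVec_vecCol {O : Type*}
    {L : O → Matrix (Fin n × Fin n) (Fin n × Fin n) ℂ}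
    {Φ : O → Matrix (Fin n) (Fin n) ℂ → Matrix (Fin n) (Fin n) ℂ}
    (hL : ∀ y M, L y *ᵥ vecCol M = vecCol (Φ y M)) (ρ : Matrix (Fin n) (Fin n) ℂ)
    (ys : List O) : (ys.map L).prod *ᵥ vecCol ρ = vecCol (ys.foldr Φ ρ) := by
  induction ys with
  | nil => simp
  | cons y ys ih => rw [List.map_cons, List.prod_cons, ← mulVec_mulVec, ih, hL, List.foldr_cons]

end Vectorization

theorem stmt13 {n m : ℕ} {O : Type*} [Fintype O]
    (K : O → Fin m → Matrix (Fin n) (Fin n) ℂ)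
    (hK : ∑ y : O, ∑ w, (K y w)ᴴ * K y w = 1)
    (ρ₀ : Matrix (Fin n) (Fin n) ℂ) (hρ : ρ₀.PosSemidef) (htr : ρ₀.trace = 1)
    (L : O → Matrix (Fin n × Fin n) (Fin n × Fin n) ℂ)
    (hL : ∀ y, L y = ∑ w, (K y w).map star ⊗ₖ K y w)
    (σ : Fin n × Fin n → ℂ) (hσ : σ = vecCol 1)
    (x₀ : Fin n × Fin n → ℂ) (hx₀ : x₀ = vecCol ρ₀) :
    star σ ⬝ᵥ x₀ = 1 ∧
    (∀ ys : List O,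
      star σ ⬝ᵥ (ys.map L).prod.mulVec x₀ =
        ∑ y : O, star σ ⬝ᵥ (L y).mulVec ((ys.map L).prod.mulVec x₀)) ∧
    (∀ ys : List O,
      (star σ ⬝ᵥ (ys.map L).prod.mulVec x₀).im = 0 ∧
      0 ≤ (star σ ⬝ᵥ (ys.map L).prod.mulVec x₀).re ∧
      (star σ ⬝ᵥ (ys.map L).prod.mulVec x₀).re ≤ 1) := by
  subst hσ hx₀
  have hLvec (y) (M) : L y *ᵥ vecCol M = vecCol (krausMap (K y) M) := by
    rw [hL, sum_kroneckerMap_mulVec_vecCol]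
  simp only [list_prod_mulVec_vecCol hLvec, hLvec, star_vecCol_one_dotProduct]
  refine ⟨htr, fun ys => (sum_trace_krausMap hK _).symm, fun ys => ?_⟩
  have h0 := (posSemidef_foldr_krausMap K hρ ys).trace_nonneg
  have h1 := htr ▸ trace_foldr_krausMap_le hK hρ ys
  rw [Complex.nonneg_iff] at h0
  exact ⟨h0.2.symm, h0.1, (Complex.le_def.mp h1).1⟩
end

section
/- Let κ₀ ∈ ℂ^{m×n} satisfy κ₀†κ₀ = I, let G ∈ ℂ^{m×n} be arbitrary, and set U = [G | κ₀], V = [κ₀ | −G] (both m×2n). For τ such that I + (τ/2)V†U is invertible, define γ(τ) = κ₀ − τ U (I + (τ/2) V†U)^{-1} V† κ₀. Then γ(τ)† γ(τ) = I for all such τ, i.e., the Wen–Yin retraction stays on the Stiefel manifold. -/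
/-!
With `W = U Vᴴ = G κ₀ᴴ - κ₀ Gᴴ` (skew-Hermitian) and `c = τ / 2`, the push-through identity
`U (1 + c Vᴴ U)⁻¹ = (1 + c W)⁻¹ U` turns the low-rank formula into the Cayley transform
`γ(τ) = (1 + c W)⁻¹ (1 - c W) κ₀`. The Cayley transform of a skew-Hermitian matrix is
unitary, so `γᴴ γ = κ₀ᴴ κ₀ = 1`.
-/

open Matrix

namespace Matrix

section Cayley

variable {ι R : Type*} [Fintype ι] [DecidableEq ι] [CommRing R] [StarRing R]

theorem one_add_inv_mul_one_sub_mem_unitaryGroup {S : Matrix ι ι R} (hS : Sᴴ = -S)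
    (hunit : IsUnit (1 + S).det) : (1 + S)⁻¹ * (1 - S) ∈ unitaryGroup ι R := by
  have hstar : (1 + S)ᴴ = 1 - S := by
    rw [conjTranspose_add, conjTranspose_one, hS, sub_eq_add_neg]
  have hunit' : IsUnit (1 - S).det := by
    rw [← hstar, det_conjTranspose]
    exact hunit.star
  have hcomm : (1 - S)⁻¹ * (1 + S)⁻¹ = (1 + S)⁻¹ * (1 - S)⁻¹ := by
    rw [← mul_inv_rev, ← mul_inv_rev]
    congr 1
    noncomm_ring
  rw [mem_unitaryGroup_iff', star_eq_conjTranspose, conjTranspose_mul,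
    conjTranspose_nonsing_inv, hstar, ← hstar, conjTranspose_conjTranspose, hstar]
  calc (1 + S) * (1 - S)⁻¹ * ((1 + S)⁻¹ * (1 - S))
      = (1 + S) * ((1 - S)⁻¹ * (1 + S)⁻¹) * (1 - S) := by simp only [Matrix.mul_assoc]
    _ = 1 := by
      rw [hcomm, ← Matrix.mul_assoc, mul_nonsing_inv _ hunit, Matrix.one_mul,
        nonsing_inv_mul _ hunit']

end Cayley

section PushThrough

variable {m k R : Type*} [Fintype m] [DecidableEq m] [Fintype k] [DecidableEq k] [CommRing R]

theorem mul_inv_one_add_mul_comm (U : Matrix m k R) (V : Matrix k m R)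
    (h : IsUnit (1 + V * U).det) : U * (1 + V * U)⁻¹ = (1 + U * V)⁻¹ * U := by
  have h' : IsUnit (1 + U * V).det := by rwa [det_one_add_mul_comm]
  have push : (1 + U * V) * U = U * (1 + V * U) := by
    simp only [Matrix.add_mul, Matrix.mul_add, Matrix.one_mul, Matrix.mul_one, Matrix.mul_assoc]
  calc U * (1 + V * U)⁻¹ = (1 + U * V)⁻¹ * ((1 + U * V) * U) * (1 + V * U)⁻¹ := by
        rw [← Matrix.mul_assoc, nonsing_inv_mul _ h', Matrix.one_mul]
    _ = (1 + U * V)⁻¹ * U := by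
        rw [push, Matrix.mul_assoc, Matrix.mul_assoc, mul_nonsing_inv _ h, Matrix.mul_one]

theorem isUnit_det_one_add_smul_mul_comm (U : Matrix m k R) (V : Matrix k m R) (c : R)
    (h : IsUnit (1 + c • (V * U)).det) : IsUnit (1 + c • (U * V)).det := by
  rwa [← Matrix.smul_mul, det_one_add_mul_comm, Matrix.mul_smul]

theorem sub_smul_mul_inv_mul_eq_cayley {n : Type*} (U : Matrix m k R) (V : Matrix k m R)
    (κ : Matrix m n R) (c : R) (h : IsUnit (1 + c • (V * U)).det) :
    κ - (2 * c) • (U * (1 + c • (V * U))⁻¹ * (V * κ)) =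
      (1 + c • (U * V))⁻¹ * (1 - c • (U * V)) * κ := by
  have hA := isUnit_det_one_add_smul_mul_comm U V c h
  have push : U * (1 + c • (V * U))⁻¹ = (1 + c • (U * V))⁻¹ * U := by
    simpa only [Matrix.smul_mul, Matrix.mul_smul] using
      mul_inv_one_add_mul_comm U (c • V) (by rwa [Matrix.smul_mul])
  calc κ - (2 * c) • (U * (1 + c • (V * U))⁻¹ * (V * κ))
      = (1 + c • (U * V))⁻¹ * ((1 + c • (U * V)) - (2 * c) • (U * V)) * κ := by
        rw [push, Matrix.mul_sub, nonsing_inv_mul _ hA, Matrix.sub_mul, Matrix.one_mul,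
          Matrix.mul_smul, Matrix.smul_mul, Matrix.mul_assoc, Matrix.mul_assoc, Matrix.mul_assoc]
    _ = (1 + c • (U * V))⁻¹ * (1 - c • (U * V)) * κ := by
        rw [two_mul, add_smul]
        congr 2
        abel

end PushThrough

theorem fromCols_mul_conjTranspose_fromCols_neg {m n R : Type*} [Fintype n] [Ring R] [StarRing R]
    (A B : Matrix m n R) : fromCols A B * (fromCols B (-A))ᴴ = A * Bᴴ - B * Aᴴ := by
  rw [conjTranspose_fromCols_eq_fromRows_conjTranspose, fromCols_mul_fromRows,
    conjTranspose_neg, Matrix.mul_neg, ← sub_eq_add_neg]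

theorem conjTranspose_mul_conjTranspose_sub_swap {m n R : Type*} [Fintype n] [Ring R] [StarRing R]
    (A B : Matrix m n R) : (A * Bᴴ - B * Aᴴ)ᴴ = -(A * Bᴴ - B * Aᴴ) := by
  rw [conjTranspose_sub, conjTranspose_mul, conjTranspose_mul, conjTranspose_conjTranspose,
    conjTranspose_conjTranspose, neg_sub]

end Matrix

theorem stmt17 {m n : ℕ} (κ₀ G : Matrix (Fin m) (Fin n) ℂ) (τ : ℝ)
    (hκ : κ₀ᴴ * κ₀ = 1)
    (U V : Matrix (Fin m) (Fin n ⊕ Fin n) ℂ)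
    (hU : U = Matrix.fromCols G κ₀) (hV : V = Matrix.fromCols κ₀ (-G))
    (hinv : IsUnit (1 + ((τ / 2 : ℝ) : ℂ) • (Vᴴ * U)))
    (γ : Matrix (Fin m) (Fin n) ℂ)
    (hγ : γ = κ₀ - (τ : ℂ) • (U * (1 + ((τ / 2 : ℝ) : ℂ) • (Vᴴ * U))⁻¹ * (Vᴴ * κ₀))) :
    γᴴ * γ = 1 := by
  set c : ℂ := ((τ / 2 : ℝ) : ℂ)
  have hτ : (τ : ℂ) = 2 * c := by simp only [c]; push_cast; ring
  have hdet : IsUnit (1 + c • (Vᴴ * U)).det := (isUnit_iff_isUnit_det _).mp hinv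
  have hskew : (c • (U * Vᴴ))ᴴ = -(c • (U * Vᴴ)) := by
    rw [conjTranspose_smul, Complex.star_def, Complex.conj_ofReal, hU, hV,
      fromCols_mul_conjTranspose_fromCols_neg, conjTranspose_mul_conjTranspose_sub_swap, smul_neg]
  have hunitary := mem_unitaryGroup_iff'.mp <| one_add_inv_mul_one_sub_mem_unitaryGroup hskew
    (isUnit_det_one_add_smul_mul_comm U Vᴴ c hdet)
  rw [hγ, hτ, sub_smul_mul_inv_mul_eq_cayley U Vᴴ κ₀ c hdet, conjTranspose_mul,
    ← star_eq_conjTranspose, Matrix.mul_assoc, ← Matrix.mul_assoc (star _), hunitary,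
    Matrix.one_mul, hκ]
end
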